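/- For integers $m \geq 0$ define $k_m(t) = (-1)^{m+1}\,\frac{2\,\Gamma\!\left(m+\tfrac{5}{2}\right)}{\sqrt{\pi}\,\Gamma(m+1)}\,t\,P_m^{(0,3/2)}(2t^2-1)$. Then for all $t \in \mathbb{R}$, $k_m$ satisfies the second-order differential equation $$t^2(1-t^2)^2\,\frac{d^2}{dt^2}k_m(t) + 2(1-2t^2)\,t\,(1-t^2)\,\frac{d}{dt}k_m(t) - \Bigl[2(m+2)(2m+1)\,t^4 - 2(2m+3)(m+1)\,t^2 + 2\Bigr]k_m(t) = 0.$$ -/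

import Mathlib

open Real Filter Finset

noncomputable def poch (a : ℝ) (k : ℕ) : ℝ := (ascPochhammer ℝ k).eval a

/-- Jacobi polynomial `P_k^{(α,β)}(x) = ((α+1)_k / k!) ₂F₁(-k, k+α+β+1; α+1; (1-x)/2)`. -/
noncomputable def jacobiP (k : ℕ) (α β : ℝ) (x : ℝ) : ℝ :=
  (poch (α + 1) k / (Nat.factorial k : ℝ)) *
    ∑ i ∈ Finset.range (k + 1),
      poch (-(k : ℝ)) i * poch ((k : ℝ) + α + β + 1) i /
        (poch (α + 1) i * (Nat.factorial i : ℝ)) * ((1 - x) / 2) ^ i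

/-- The kernel `k_m(t)` for the first derivative. -/
noncomputable def km (m : ℕ) (t : ℝ) : ℝ :=
  (-1:ℝ)^(m+1) * (2 * Real.Gamma ((m:ℝ) + 5/2) /
      (Real.sqrt Real.pi * Real.Gamma ((m:ℝ) + 1))) *
    t * jacobiP m 0 (3/2) (2*t^2 - 1)

/-!
Since `(1 - (2t² - 1)) / 2 = 1 - t²`, the kernel `k_m` is a multiple of
`∑_{i ≤ m} c_i t (1 - t²)^i` with `c_i = (-m)_i (m + 5/2)_i / (i!)²`. Writing `u = 1 - t²`,
the operator of the equation sends `t u^i` to `4 t³ (i² u^i - (i - m)(i + m + 5/2) u^{i+1})`,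
and the hypergeometric recurrence `(i + 1)² c_{i+1} = (i - m)(i + m + 5/2) c_i` makes the sum
telescope to `-4 t³ (m + 1)² c_{m+1} u^{m+1}`, which vanishes because `(-m)_{m+1} = 0`.
-/

noncomputable section

def kmOperator (m : ℕ) (t y y' y'' : ℝ) : ℝ :=
  t^2 * (1 - t^2)^2 * y''
    + 2 * (1 - 2*t^2) * t * (1 - t^2) * y'
    - (2*((m:ℝ) + 2)*(2*(m:ℝ) + 1)*t^4 - 2*(2*(m:ℝ) + 3)*((m:ℝ) + 1)*t^2 + 2) * y

lemma kmOperator_sum {ι : Type*} (m : ℕ) (t : ℝ) (s : Finset ι) (a y y' y'' : ι → ℝ) :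
    kmOperator m t (∑ i ∈ s, a i * y i) (∑ i ∈ s, a i * y' i) (∑ i ∈ s, a i * y'' i)
      = ∑ i ∈ s, a i * kmOperator m t (y i) (y' i) (y'' i) := by
  simp only [kmOperator, mul_sum, ← sum_add_distrib, ← sum_sub_distrib]
  exact sum_congr rfl fun i _ => by ring

def oddBasis (i : ℕ) (t : ℝ) : ℝ := t * (1 - t^2)^i

-- The truncated exponents are harmless: their coefficients vanish whenever they truncate.
def oddBasis' (i : ℕ) (t : ℝ) : ℝ := (1 - t^2)^i - 2*i*t^2*(1 - t^2)^(i-1)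

def oddBasis'' (i : ℕ) (t : ℝ) : ℝ :=
  -6*i*t*(1 - t^2)^(i-1) + 4*i*(i-1 : ℕ)*t^3*(1 - t^2)^(i-1-1)

lemma hasDerivAt_one_sub_sq (t : ℝ) : HasDerivAt (fun x : ℝ => 1 - x^2) (-(2*t)) t := by
  simpa using (hasDerivAt_pow 2 t).const_sub 1

lemma hasDerivAt_oddBasis (i : ℕ) (t : ℝ) : HasDerivAt (oddBasis i) (oddBasis' i t) t := by
  refine ((hasDerivAt_id' t).fun_mul ((hasDerivAt_one_sub_sq t).fun_pow i)).congr_deriv ?_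
  simp only [oddBasis']
  ring

lemma hasDerivAt_oddBasis' (i : ℕ) (t : ℝ) : HasDerivAt (oddBasis' i) (oddBasis'' i t) t := by
  have hsq : HasDerivAt (fun x : ℝ => 2*i*x^2) (2*i*(2*t)) t := by
    simpa using (hasDerivAt_pow 2 t).const_mul (2*(i:ℝ))
  refine (((hasDerivAt_one_sub_sq t).fun_pow i).fun_sub
    (hsq.fun_mul ((hasDerivAt_one_sub_sq t).fun_pow (i-1)))).congr_deriv ?_
  simp only [oddBasis'']
  ring

lemma one_sub_sq_mul_oddBasis' (i : ℕ) (t : ℝ) :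
    (1 - t^2) * oddBasis' i t = (1 - t^2)^(i+1) - 2*i*t^2*(1 - t^2)^i := by
  rcases i with _ | n
  · simp [oddBasis']
  · simp only [oddBasis', Nat.add_sub_cancel]; ring

lemma one_sub_sq_sq_mul_oddBasis'' (i : ℕ) (t : ℝ) :
    (1 - t^2)^2 * oddBasis'' i t = -6*i*t*(1 - t^2)^(i+1) + 4*i*(i-1)*t^3*(1 - t^2)^i := by
  rcases i with _ | _ | n
  · simp [oddBasis'']
  · simp [oddBasis'']; ring
  · simp only [oddBasis'', Nat.add_sub_cancel]; push_cast; ring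

lemma kmOperator_oddBasis (m i : ℕ) (t : ℝ) :
    kmOperator m t (oddBasis i t) (oddBasis' i t) (oddBasis'' i t)
      = 4*t^3 * (i^2 * (1 - t^2)^i - (i - m) * (i + m + 5/2) * (1 - t^2)^(i+1)) := by
  unfold kmOperator oddBasis
  linear_combination t^2 * one_sub_sq_sq_mul_oddBasis'' i t
    + 2 * (1 - 2*t^2) * t * one_sub_sq_mul_oddBasis' i t

lemma hasDerivAt_sum_oddBasis (s : Finset ℕ) (a : ℕ → ℝ) (t : ℝ) :
    HasDerivAt (fun x => ∑ i ∈ s, a i * oddBasis i x) (∑ i ∈ s, a i * oddBasis' i t) t :=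
  HasDerivAt.fun_sum fun i _ => (hasDerivAt_oddBasis i t).const_mul (a i)

lemma hasDerivAt_sum_oddBasis' (s : Finset ℕ) (a : ℕ → ℝ) (t : ℝ) :
    HasDerivAt (fun x => ∑ i ∈ s, a i * oddBasis' i x) (∑ i ∈ s, a i * oddBasis'' i t) t :=
  HasDerivAt.fun_sum fun i _ => (hasDerivAt_oddBasis' i t).const_mul (a i)

lemma iteratedDeriv_two_sum_oddBasis (s : Finset ℕ) (a : ℕ → ℝ) (t : ℝ) :
    iteratedDeriv 2 (fun x => ∑ i ∈ s, a i * oddBasis i x) t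
      = ∑ i ∈ s, a i * oddBasis'' i t := by
  have hderiv : deriv (fun x => ∑ i ∈ s, a i * oddBasis i x)
      = fun x => ∑ i ∈ s, a i * oddBasis' i x :=
    funext fun x => (hasDerivAt_sum_oddBasis s a x).deriv
  rw [iteratedDeriv_succ, iteratedDeriv_one, hderiv]
  exact (hasDerivAt_sum_oddBasis' s a t).deriv

def kmCoeff (m i : ℕ) : ℝ := poch (-(m:ℝ)) i * poch ((m:ℝ) + 5/2) i / (i.factorial : ℝ)^2

lemma kmCoeff_succ (m i : ℕ) :
    ((i:ℝ) + 1)^2 * kmCoeff m (i+1) = (i - m) * (i + m + 5/2) * kmCoeff m i := by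
  simp only [kmCoeff, poch, ascPochhammer_succ_eval, Nat.factorial_succ]
  push_cast
  field_simp
  ring

lemma kmCoeff_self_add_one (m : ℕ) : kmCoeff m (m+1) = 0 := by
  simp [kmCoeff, poch, ascPochhammer_eval_neg_coe_nat_of_lt (Nat.lt_succ_self m)]

lemma sum_kmCoeff_mul_kmOperator_oddBasis (m : ℕ) (t : ℝ) :
    ∑ i ∈ range (m+1),
      kmCoeff m i * kmOperator m t (oddBasis i t) (oddBasis' i t) (oddBasis'' i t) = 0 := by
  set g : ℕ → ℝ := fun i => 4*t^3 * ((i:ℝ)^2 * kmCoeff m i * (1 - t^2)^i)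
  have hstep : ∀ i ∈ range (m+1),
      kmCoeff m i * kmOperator m t (oddBasis i t) (oddBasis' i t) (oddBasis'' i t)
        = g i - g (i+1) := fun i _ => by
    simp only [g, kmOperator_oddBasis]
    push_cast
    linear_combination 4*t^3*(1 - t^2)^(i+1) * kmCoeff_succ m i
  rw [sum_congr rfl hstep, sum_range_sub']
  simp [g, kmCoeff_self_add_one]

lemma km_eq_sum_oddBasis (m : ℕ) :
    ∃ C : ℝ, km m = fun t => ∑ i ∈ range (m+1), C * kmCoeff m i * oddBasis i t := by
  refine ⟨(-1:ℝ)^(m+1) * (2 * Gamma ((m:ℝ) + 5/2) / (sqrt π * Gamma ((m:ℝ) + 1))), ?_⟩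
  have hfact : (m.factorial : ℝ) ≠ 0 := by positivity
  ext t
  simp only [km, jacobiP, kmCoeff, oddBasis, poch, zero_add, ascPochhammer_eval_one,
    div_self hfact, one_mul, mul_sum]
  refine sum_congr rfl fun i _ => ?_
  ring_nf

end

theorem stmt13 (m : ℕ) (t : ℝ) :
    t^2 * (1 - t^2)^2 * iteratedDeriv 2 (km m) t
      + 2 * (1 - 2*t^2) * t * (1 - t^2) * deriv (km m) t
      - (2*((m:ℝ) + 2)*(2*(m:ℝ) + 1)*t^4 - 2*(2*(m:ℝ) + 3)*((m:ℝ) + 1)*t^2 + 2) * km m t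
      = 0 := by
  obtain ⟨C, hkm⟩ := km_eq_sum_oddBasis m
  change kmOperator m t (km m t) (deriv (km m) t) (iteratedDeriv 2 (km m) t) = 0
  rw [hkm, iteratedDeriv_two_sum_oddBasis, (hasDerivAt_sum_oddBasis _ _ t).deriv, kmOperator_sum]
  simp only [mul_assoc, ← mul_sum, sum_kmCoeff_mul_kmOperator_oddBasis, mul_zero]
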